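/- Let W : X → P(Y) with X, Y finite, ρ : X → ℝ≥0^ℓ, λ ∈ ℝ≥0^ℓ, α ∈ (0,1), and P a probability mass function on X. Define the Rényi–Gallager information I_α^{G,λ}(P;W) := inf_Q D_α( P ∘ (W·e^{((1−α)/α)λ·ρ}) ‖ P ⊗ Q ), where (P ∘ (W e^{((1−α)/α)λ·ρ}))(x,y) := P(x) W(x)(y) e^{((1−α)/α) λ·ρ(x)} and (P⊗Q)(x,y) := P(x)Q(y). Then I_α^{G,λ}(P;W) ≤ I_α^λ(P;W) := I_α(P;W) − λ·Σ_x P(x)ρ(x); i.e., the R-G information is at most the A-L information for α ∈ (0,1). -/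

import Mathlib

open scoped BigOperators

/-- A probability mass function on a finite type. -/
def IsPMF {Y : Type*} [Fintype Y] (Q : Y → ℝ) : Prop :=
  (∀ y, 0 ≤ Q y) ∧ ∑ y, Q y = 1

/-- The power sum appearing in the Rényi divergence; since `(0:ℝ) ^ (1-α) = 0` for `1-α > 0`,
the sum automatically restricts to `y` with `Q y > 0`. -/
noncomputable def rSum {Y : Type*} [Fintype Y] (α : ℝ) (W Q : Y → ℝ) : ℝ :=
  ∑ y, W y ^ α * Q y ^ (1 - α)

/-- Order-`α` Rényi divergence (for `α ∈ (0,1)`), valued in `EReal`, with the convention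
that it is `⊤` when the power sum vanishes. -/
noncomputable def rDiv {Y : Type*} [Fintype Y] (α : ℝ) (W Q : Y → ℝ) : EReal :=
  if rSum α W Q = 0 then ⊤
  else (((1 / (α - 1)) * Real.log (rSum α W Q) : ℝ) : EReal)

/-- Kullback–Leibler divergence, valued in `EReal`, `⊤` unless `W ≪ Q`. -/
noncomputable def kDiv {Y : Type*} [Fintype Y] (W Q : Y → ℝ) : EReal :=
  if ∀ y, Q y = 0 → W y = 0 then
    (((∑ y, if W y = 0 then 0 else W y * Real.log (W y / Q y)) : ℝ) : EReal)
  else ⊤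

/-- Order-`α` divergence for `α ∈ (0,1]`: Rényi for `α ≠ 1`, KL for `α = 1`. -/
noncomputable def dA {Y : Type*} [Fintype Y] (α : ℝ) (W Q : Y → ℝ) : EReal :=
  if α = 1 then kDiv W Q else rDiv α W Q

/-- Conditional divergence `D_α(W‖Q|P) = ∑_x P(x) D_α(W(x)‖Q)`. -/
noncomputable def cDiv {X Y : Type*} [Fintype X] [Fintype Y]
    (α : ℝ) (W : X → Y → ℝ) (Q : Y → ℝ) (P : X → ℝ) : EReal :=
  ∑ x, (P x : EReal) * dA α (W x) Q

/-- Augustin information `I_α(P;W) = inf_Q D_α(W‖Q|P)`. -/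
noncomputable def aInfo {X Y : Type*} [Fintype X] [Fintype Y]
    (α : ℝ) (P : X → ℝ) (W : X → Y → ℝ) : EReal :=
  ⨅ Q ∈ {Q : Y → ℝ | IsPMF Q}, cDiv α W Q P

/-!
For a fixed `Q` the power sum of the tilted joint measure against `P ⊗ Q` factors as
`∑ x, P x * (exp ((1 - α) * λ·ρ x) * S x)` with `S x = ∑ y, W x y ^ α * Q y ^ (1 - α)`.
Jensen's inequality for the concave `log` bounds its logarithm below by the `P`-average of
`(1 - α) * λ·ρ x + log (S x)`; dividing by `α - 1 < 0` reverses this into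
`D_α(joint ‖ P ⊗ Q) ≤ D_α(W ‖ Q | P) - λ·E_P[ρ]`, and one takes the infimum over `Q`.
-/

open Finset Real

lemma EReal.coe_sum {ι : Type*} (s : Finset ι) (f : ι → ℝ) :
    ((∑ i ∈ s, f i : ℝ) : EReal) = ∑ i ∈ s, (f i : EReal) :=
  map_sum (⟨⟨((↑) : ℝ → EReal), EReal.coe_zero⟩, EReal.coe_add⟩ : ℝ →+ EReal) f s

lemma Real.sum_mul_log_le_log_sum_mul {ι : Type*} {s : Finset ι} {w z : ι → ℝ}
    (hw : ∀ i ∈ s, 0 ≤ w i) (hw₁ : ∑ i ∈ s, w i = 1) (hz : ∀ i ∈ s, w i ≠ 0 → 0 < z i) :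
    ∑ i ∈ s, w i * log (z i) ≤ log (∑ i ∈ s, w i * z i) := by
  classical
  have hsupp : ∀ {f : ι → ℝ}, (∀ i, w i = 0 → f i = 0) →
      ∑ i ∈ s with w i ≠ 0, f i = ∑ i ∈ s, f i :=
    fun hf => sum_filter_of_ne fun i _ hfi hwi => hfi (hf i hwi)
  rw [← hsupp (f := fun i => w i * log (z i)) (by simp_all),
    ← hsupp (f := fun i => w i * z i) (by simp_all)]
  rw [← hsupp (f := w) fun _ h => h] at hw₁
  exact strictConcaveOn_log_Ioi.concaveOn.le_map_sum (fun i hi => hw i (mem_filter.1 hi).1) hw₁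
    fun i hi => hz i (mem_filter.1 hi).1 (mem_filter.1 hi).2

section Divergence

variable {X Y : Type*} [Fintype X] [Fintype Y]

lemma rSum_nonneg {α : ℝ} {W Q : Y → ℝ} (hW : ∀ y, 0 ≤ W y) (hQ : ∀ y, 0 ≤ Q y) :
    0 ≤ rSum α W Q :=
  sum_nonneg fun y _ => mul_nonneg (rpow_nonneg (hW y) _) (rpow_nonneg (hQ y) _)

lemma rSum_tilted_prod {α t : ℝ} (hα : α ≠ 0) {P : X → ℝ} (hP : ∀ x, 0 ≤ P x)
    {W : X → Y → ℝ} (hW : ∀ x y, 0 ≤ W x y) {Q : Y → ℝ} (hQ : ∀ y, 0 ≤ Q y) (L : X → ℝ) :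
    rSum α (fun p : X × Y => P p.1 * W p.1 p.2 * exp (t / α * L p.1))
        (fun p : X × Y => P p.1 * Q p.2) =
      ∑ x, P x * (exp (t * L x) * rSum α (W x) Q) := by
  rw [rSum, Fintype.sum_prod_type]
  refine sum_congr rfl fun x _ => ?_
  rw [rSum, mul_sum, mul_sum]
  refine sum_congr rfl fun y _ => ?_
  have hexp : exp (t / α * L x) ^ α = exp (t * L x) := by
    rw [← exp_mul]
    field_simp
  have hPx : P x ^ α * P x ^ (1 - α) = P x := by
    rw [← rpow_add' (hP x) (by norm_num)]
    norm_num
  rw [mul_rpow (mul_nonneg (hP x) (hW x y)) (exp_pos _).le, mul_rpow (hP x) (hW x y),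
    mul_rpow (hP x) (hQ y), hexp]
  linear_combination (W x y ^ α * exp (t * L x) * Q y ^ (1 - α)) * hPx

lemma dA_of_rSum_eq_zero {α : ℝ} (hα : α ≠ 1) {W Q : Y → ℝ} (h : rSum α W Q = 0) :
    dA α W Q = ⊤ := by
  rw [dA, if_neg hα, rDiv, if_pos h]

lemma dA_of_rSum_ne_zero {α : ℝ} (hα : α ≠ 1) {W Q : Y → ℝ} (h : rSum α W Q ≠ 0) :
    dA α W Q = ((1 / (α - 1) * log (rSum α W Q) : ℝ) : EReal) := by
  rw [dA, if_neg hα, rDiv, if_neg h]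

lemma coe_mul_dA_ne_bot {α c : ℝ} (hα : α ≠ 1) (hc : 0 ≤ c) (W Q : Y → ℝ) :
    (c : EReal) * dA α W Q ≠ ⊥ := by
  rcases eq_or_ne (rSum α W Q) 0 with h | h
  · rw [dA_of_rSum_eq_zero hα h]
    rcases hc.eq_or_lt with rfl | hc
    · simp
    · simp [EReal.coe_mul_top_of_pos hc]
  · rw [dA_of_rSum_ne_zero hα h, ← EReal.coe_mul]
    exact EReal.coe_ne_bot _

lemma cDiv_eq_top {α : ℝ} (hα : α ≠ 1) {W : X → Y → ℝ} {Q : Y → ℝ} {P : X → ℝ}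
    (hP : ∀ x, 0 ≤ P x) {x₀ : X} (hPx₀ : P x₀ ≠ 0) (hx₀ : rSum α (W x₀) Q = 0) :
    cDiv α W Q P = ⊤ := by
  classical
  rw [cDiv, ← add_sum_erase _ _ (mem_univ x₀), dA_of_rSum_eq_zero hα hx₀,
    EReal.coe_mul_top_of_pos ((hP x₀).lt_of_ne' hPx₀)]
  exact EReal.top_add_of_ne_bot <| sum_induction _ (· ≠ ⊥)
    (fun _ _ ha hb => EReal.add_ne_bot_iff.2 ⟨ha, hb⟩) EReal.zero_ne_bot
    fun x _ => coe_mul_dA_ne_bot hα (hP x) _ _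

lemma cDiv_eq_coe {α : ℝ} (hα : α ≠ 1) {W : X → Y → ℝ} {Q : Y → ℝ} {P : X → ℝ}
    (h : ∀ x, P x ≠ 0 → rSum α (W x) Q ≠ 0) :
    cDiv α W Q P = ((∑ x, P x * (1 / (α - 1) * log (rSum α (W x) Q)) : ℝ) : EReal) := by
  rw [cDiv, EReal.coe_sum]
  refine sum_congr rfl fun x _ => ?_
  rcases eq_or_ne (P x) 0 with hPx | hPx
  · simp [hPx]
  · rw [dA_of_rSum_ne_zero hα (h x hPx), ← EReal.coe_mul]

lemma one_div_sub_one_mul_log_sum_exp_mul_le {α : ℝ} (hα : α < 1) {P : X → ℝ} (hP : IsPMF P)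
    {S : X → ℝ} (hS : ∀ x, P x ≠ 0 → 0 < S x) (L : X → ℝ) :
    1 / (α - 1) * log (∑ x, P x * (exp ((1 - α) * L x) * S x)) ≤
      ∑ x, P x * (1 / (α - 1) * log (S x)) - ∑ x, P x * L x := by
  have hjensen := sum_mul_log_le_log_sum_mul (s := univ) (fun x _ => hP.1 x) hP.2
    fun x _ hx => mul_pos (exp_pos ((1 - α) * L x)) (hS x hx)
  have hα₁ : α - 1 < 0 := by linarith
  have hneg : 1 / (α - 1) < 0 := one_div_neg.2 hα₁
  calc _ ≤ 1 / (α - 1) * ∑ x, P x * log (exp ((1 - α) * L x) * S x) :=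
        mul_le_mul_of_nonpos_left hjensen hneg.le
    _ = _ := by
      rw [mul_sum, ← sum_sub_distrib]
      refine sum_congr rfl fun x _ => ?_
      rcases eq_or_ne (P x) 0 with hPx | hPx
      · simp [hPx]
      · rw [log_mul (exp_ne_zero _) (hS x hPx).ne', log_exp]
        field_simp [hα₁.ne]
        ring

theorem rDiv_tilted_prod_le_cDiv_sub {α : ℝ} (hα : α ∈ Set.Ioo (0 : ℝ) 1) {P : X → ℝ}
    (hP : IsPMF P) {W : X → Y → ℝ} (hW : ∀ x y, 0 ≤ W x y) {Q : Y → ℝ} (hQ : ∀ y, 0 ≤ Q y)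
    (L : X → ℝ) :
    rDiv α (fun p : X × Y => P p.1 * W p.1 p.2 * exp ((1 - α) / α * L p.1))
        (fun p : X × Y => P p.1 * Q p.2) ≤
      cDiv α W Q P - ((∑ x, P x * L x : ℝ) : EReal) := by
  by_cases hsupp : ∃ x, P x ≠ 0 ∧ rSum α (W x) Q = 0
  · obtain ⟨x₀, hPx₀, hx₀⟩ := hsupp
    rw [cDiv_eq_top hα.2.ne hP.1 hPx₀ hx₀, EReal.top_sub_coe]
    exact le_top
  push Not at hsupp
  have hS : ∀ x, P x ≠ 0 → 0 < rSum α (W x) Q :=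
    fun x hx => (rSum_nonneg (hW x) hQ).lt_of_ne' (hsupp x hx)
  have hT : 0 < ∑ x, P x * (exp ((1 - α) * L x) * rSum α (W x) Q) := by
    obtain ⟨x₀, -, hx₀⟩ := exists_ne_zero_of_sum_ne_zero (hP.2.symm ▸ one_ne_zero)
    refine sum_pos' (fun x _ => ?_) ⟨x₀, mem_univ _, ?_⟩
    · exact mul_nonneg (hP.1 x) (mul_nonneg (exp_pos _).le (rSum_nonneg (hW x) hQ))
    · exact mul_pos ((hP.1 x₀).lt_of_ne' hx₀) (mul_pos (exp_pos _) (hS x₀ hx₀))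
  rw [rDiv, rSum_tilted_prod hα.1.ne' hP.1 hW hQ, if_neg hT.ne', cDiv_eq_coe hα.2.ne hsupp,
    ← EReal.coe_sub, EReal.coe_le_coe_iff]
  exact one_div_sub_one_mul_log_sum_exp_mul_le hα.2 hP hS L

end Divergence

theorem rg_le_al_general {X Y : Type*} [Fintype X] [Fintype Y]
    {l : ℕ}
    (α : ℝ) (hα : α ∈ Set.Ioo (0 : ℝ) 1)
    (W : X → Y → ℝ) (hW : ∀ x, IsPMF (W x))
    (ρ : X → Fin l → ℝ)
    (lam : Fin l → ℝ)
    (P : X → ℝ) (hP : IsPMF P) :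
    (⨅ Q ∈ {Q : Y → ℝ | IsPMF Q},
        rDiv α
          (fun p : X × Y =>
            P p.1 * W p.1 p.2 * Real.exp ((1 - α) / α * ∑ i, lam i * ρ p.1 i))
          (fun p : X × Y => P p.1 * Q p.2)) ≤
      aInfo α P W - (((∑ i, lam i * ∑ x, P x * ρ x i) : ℝ) : EReal) := by
  have hmean : ∑ i, lam i * ∑ x, P x * ρ x i = ∑ x, P x * ∑ i, lam i * ρ x i := by
    simp_rw [mul_sum]
    rw [sum_comm]
    simp_rw [mul_left_comm]
  rw [EReal.le_sub_iff_add_le (Or.inl (EReal.coe_ne_bot _)) (Or.inl (EReal.coe_ne_top _)), aInfo]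
  refine le_iInf₂ fun Q hQ => ?_
  rw [← EReal.le_sub_iff_add_le (Or.inl (EReal.coe_ne_bot _)) (Or.inl (EReal.coe_ne_top _)),
    hmean]
  exact (iInf₂_le Q hQ).trans
    (rDiv_tilted_prod_le_cDiv_sub hα hP (fun x => (hW x).1) hQ.1 fun x => ∑ i, lam i * ρ x i)

/-- the Rényi–Gallager information is at most the Augustin–Legendre
information for `α ∈ (0,1)`. -/
theorem rg_le_al {X Y : Type*} [Fintype X] [Fintype Y]
    [Nonempty X] [Nonempty Y] {l : ℕ} (hl : 0 < l)
    (α : ℝ) (hα : α ∈ Set.Ioo (0 : ℝ) 1)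
    (W : X → Y → ℝ) (hW : ∀ x, IsPMF (W x))
    (ρ : X → Fin l → ℝ) (hρ : ∀ x i, 0 ≤ ρ x i)
    (lam : Fin l → ℝ) (hlam : ∀ i, 0 ≤ lam i)
    (P : X → ℝ) (hP : IsPMF P) :
    (⨅ Q ∈ {Q : Y → ℝ | IsPMF Q},
        rDiv α
          (fun p : X × Y =>
            P p.1 * W p.1 p.2 * Real.exp ((1 - α) / α * ∑ i, lam i * ρ p.1 i))
          (fun p : X × Y => P p.1 * Q p.2)) ≤
      aInfo α P W - (((∑ i, lam i * ∑ x, P x * ρ x i) : ℝ) : EReal) :=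
  rg_le_al_general α hα W hW ρ lam P hP
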